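/- Define F(θ) = (θ + σ sin θ)/sqrt(θ - sin θ cos θ) for θ ∈ (0, π) and σ ∈ (-1, 1). Then F attains a strict local minimum at the unique θ₀ ∈ (0, π) with cos θ₀ = -σ. -/

import Mathlib

/-!
Since `θ + σ sin θ > 0` on `(0, π)`, it suffices to study `F² = (θ + σ sin θ)² / (θ - sin θ cos θ)`.
Its derivative factors as `2 (θ + σ sin θ) (θ cos θ - sin θ) (cos θ + σ) / (θ - sin θ cos θ)²`,
and on `(0, π)` the first factor is positive and `θ cos θ - sin θ` negative, so the derivative has
the sign of `-(cos θ + σ)`: `F²` decreases before `θ₀ = arccos (-σ)` and increases after it.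
-/

open Real Set Filter Topology

namespace Capillarity

lemma sin_mul_cos_lt_self {θ : ℝ} (hθ : 0 < θ) : sin θ * cos θ < θ := by
  have := sin_lt (by positivity : 0 < 2 * θ)
  rw [sin_two_mul] at this
  linarith

lemma mul_cos_lt_sin {θ : ℝ} (hθ : θ ∈ Ioo 0 π) : θ * cos θ < sin θ := by
  have hsin := sin_pos_of_mem_Ioo hθ
  rcases lt_or_ge θ (π / 2) with hθπ | hθπ
  · have hcos : 0 < cos θ := cos_pos_of_mem_Ioo ⟨by linarith [hθ.1], hθπ⟩
    have := lt_tan hθ.1 hθπ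
    rwa [tan_eq_sin_div_cos, lt_div_iff₀ hcos] at this
  · have hcos : cos θ ≤ 0 := cos_nonpos_of_pi_div_two_le_of_le hθπ (by linarith [hθ.2, pi_pos])
    nlinarith [hθ.1]

lemma add_mul_sin_pos {σ θ : ℝ} (hσ : -1 ≤ σ) (hθ : θ ∈ Ioo 0 π) : 0 < θ + σ * sin θ := by
  have hsin := sin_pos_of_mem_Ioo hθ
  nlinarith [sin_lt hθ.1]

noncomputable def energySq (σ θ : ℝ) : ℝ := (θ + σ * sin θ) ^ 2 / (θ - sin θ * cos θ)

lemma hasDerivAt_energySq (σ : ℝ) {θ : ℝ} (hθ : 0 < θ) :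
    HasDerivAt (energySq σ)
      (2 * (θ + σ * sin θ) * (θ * cos θ - sin θ) * (cos θ + σ) / (θ - sin θ * cos θ) ^ 2) θ := by
  have hnum : HasDerivAt (fun x ↦ (x + σ * sin x) ^ 2)
      (2 * (θ + σ * sin θ) ^ 1 * (1 + σ * cos θ)) θ :=
    ((hasDerivAt_id θ).add ((hasDerivAt_sin θ).const_mul σ)).fun_pow 2
  have hden : HasDerivAt (fun x ↦ x - sin x * cos x)
      (1 - (cos θ * cos θ + sin θ * -sin θ)) θ :=
    (hasDerivAt_id θ).sub ((hasDerivAt_sin θ).mul (hasDerivAt_cos θ))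
  refine (hnum.fun_div hden (sub_pos.2 (sin_mul_cos_lt_self hθ)).ne').congr_deriv ?_
  congr 1
  linear_combination (-(θ + σ * sin θ) ^ 2) * sin_sq_add_cos_sq θ

lemma strictAntiOn_energySq {σ : ℝ} (hσ : σ ∈ Icc (-1) 1) :
    StrictAntiOn (energySq σ) (Ioc 0 (arccos (-σ))) := by
  have hθ₀π := arccos_le_pi (-σ)
  have hcos : cos (arccos (-σ)) = -σ := cos_arccos (by linarith [hσ.2]) (by linarith [hσ.1])
  refine strictAntiOn_of_deriv_neg (convex_Ioc _ _)
    (fun x hx ↦ (hasDerivAt_energySq σ hx.1).continuousAt.continuousWithinAt) fun x hx ↦ ?_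
  rw [interior_Ioc] at hx
  have hxπ : x ∈ Ioo 0 π := ⟨hx.1, hx.2.trans_le hθ₀π⟩
  have hcosx : -σ < cos x := hcos ▸
    strictAntiOn_cos (Ioo_subset_Icc_self hxπ) ⟨arccos_nonneg _, hθ₀π⟩ hx.2
  rw [(hasDerivAt_energySq σ hx.1).deriv]
  have := add_mul_sin_pos hσ.1 hxπ
  have := mul_cos_lt_sin hxπ
  refine div_neg_of_neg_of_pos ?_ (pow_pos (sub_pos.2 (sin_mul_cos_lt_self hx.1)) 2)
  exact mul_neg_of_neg_of_pos (mul_neg_of_pos_of_neg (by positivity) (by linarith))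
    (by linarith)

lemma strictMonoOn_energySq {σ : ℝ} (hσ : σ ∈ Ioc (-1) 1) :
    StrictMonoOn (energySq σ) (Ico (arccos (-σ)) π) := by
  have hθ₀ : 0 < arccos (-σ) := arccos_pos.2 (by linarith [hσ.1])
  have hcos : cos (arccos (-σ)) = -σ := cos_arccos (by linarith [hσ.2]) (by linarith [hσ.1])
  refine strictMonoOn_of_deriv_pos (convex_Ico _ _) (fun x hx ↦
    (hasDerivAt_energySq σ (hθ₀.trans_le hx.1)).continuousAt.continuousWithinAt) fun x hx ↦ ?_
  rw [interior_Ico] at hx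
  have hxπ : x ∈ Ioo 0 π := ⟨hθ₀.trans hx.1, hx.2⟩
  have hcosx : cos x < -σ := hcos ▸
    strictAntiOn_cos ⟨hθ₀.le, arccos_le_pi _⟩ (Ioo_subset_Icc_self hxπ) hx.1
  rw [(hasDerivAt_energySq σ hxπ.1).deriv]
  have := add_mul_sin_pos hσ.1.le hxπ
  have := mul_cos_lt_sin hxπ
  refine div_pos ?_ (pow_pos (sub_pos.2 (sin_mul_cos_lt_self hxπ.1)) 2)
  exact mul_pos_of_neg_of_neg (mul_neg_of_pos_of_neg (by positivity) (by linarith))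
    (by linarith)

lemma eventually_lt_of_strictAntiOn_of_strictMonoOn {f : ℝ → ℝ} {a b x₀ : ℝ}
    (ha : a < x₀) (hb : x₀ < b) (hanti : StrictAntiOn f (Ioc a x₀))
    (hmono : StrictMonoOn f (Ico x₀ b)) : ∀ᶠ x in 𝓝[≠] x₀, f x₀ < f x := by
  filter_upwards [mem_nhdsWithin_of_mem_nhds (Ioo_mem_nhds ha hb), self_mem_nhdsWithin]
    with x hx hne
  rcases lt_or_gt_of_ne hne with h | h
  · exact hanti ⟨hx.1, h.le⟩ ⟨ha, le_rfl⟩ h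
  · exact hmono ⟨le_rfl, hb⟩ ⟨h.le, hx.2⟩ h

lemma sqrt_energySq {σ θ : ℝ} (hσ : -1 ≤ σ) (hθ : θ ∈ Ioo 0 π) :
    √(energySq σ θ) = (θ + σ * sin θ) / √(θ - sin θ * cos θ) := by
  rw [energySq, sqrt_div (sq_nonneg _), sqrt_sq (add_mul_sin_pos hσ hθ).le]

end Capillarity

open Capillarity in
theorem capillarity_energy_strict_local_min (σ : ℝ) (hσ : σ ∈ Ioo (-1 : ℝ) 1)
    (F : ℝ → ℝ)
    (hF : ∀ θ, F θ = (θ + σ * Real.sin θ) / Real.sqrt (θ - Real.sin θ * Real.cos θ)) :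
    ∃ θ₀ ∈ Ioo (0 : ℝ) π, Real.cos θ₀ = -σ ∧
      (∀ θ ∈ Ioo (0 : ℝ) π, Real.cos θ = -σ → θ = θ₀) ∧
      (∀ᶠ θ in nhdsWithin θ₀ {θ₀}ᶜ, F θ₀ < F θ) := by
  obtain ⟨hσ₁, hσ₂⟩ := hσ
  have hθ₀ : arccos (-σ) ∈ Ioo 0 π := ⟨arccos_pos.2 (by linarith), arccos_lt_pi.2 (by linarith)⟩
  have hcos : cos (arccos (-σ)) = -σ := cos_arccos (by linarith) (by linarith)
  have hFsq : ∀ θ ∈ Ioo 0 π, F θ = √(energySq σ θ) := fun θ hθ ↦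
    (hF θ).trans (sqrt_energySq hσ₁.le hθ).symm
  refine ⟨arccos (-σ), hθ₀, hcos, fun θ hθ h ↦
    injOn_cos (Ioo_subset_Icc_self hθ) (Ioo_subset_Icc_self hθ₀) (h.trans hcos.symm), ?_⟩
  have hlt := eventually_lt_of_strictAntiOn_of_strictMonoOn hθ₀.1 hθ₀.2
    (strictAntiOn_energySq ⟨hσ₁.le, hσ₂.le⟩) (strictMonoOn_energySq ⟨hσ₁, hσ₂.le⟩)
  filter_upwards [hlt, mem_nhdsWithin_of_mem_nhds (Ioo_mem_nhds hθ₀.1 hθ₀.2)] with θ hθlt hθ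
  rw [hFsq _ hθ₀, hFsq _ hθ]
  exact sqrt_lt_sqrt (div_nonneg (sq_nonneg _) (sub_pos.2 (sin_mul_cos_lt_self hθ₀.1)).le) hθlt
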